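/- Let G be a simple graph with vertex set V and exactly m edges, and let κ, τ ∈ ℕ. Construct the training data set over the features {d_v : v ∈ V}: for each edge uw of G, one red example e_{uw} with e_{uw}[d_u] = e_{uw}[d_w] = 1 and value 0 in all other features; and |V|² blue examples with value 0 in every feature. Then G has a vertex set S with |S| ≤ κ such that at least τ edges of G have an endpoint in S if and only if there exists a decision tree over these features with at most κ cuts making at most m − τ errors on this training data set. -/

import Mathlib

/-!
A vertex set `S` is realised by the tree that cuts every feature `d_v`, `v ∈ S`, at `1/2`,
sending the large side to a red leaf and the all-`≤ 1/2` side to a blue leaf: the zero examples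
are all classified correctly and a red edge example is classified correctly exactly when the edge
is covered by `S`.

Conversely, let `S` be the set of features cut along the path of the all-zero example in a tree
`T`; then `|S|` is at most the number of cuts. An example agreeing with `0` on `S` follows the same
path, so if `T` classifies `0` as blue, every correctly classified (red) edge example has an
endpoint in `S`. If `T` classifies `0` as red, all `|V|²` blue examples are errors, and
`|V|² ≤ m - τ` together with `m ≤ |V|²` forces `τ = 0`.
-/

/-- The two class labels. -/
def blue : Bool := true

def red : Bool := false

/-- Decision trees with features of type `α`: each leaf carries a class label,
each internal node (a *cut*) carries a feature and a real threshold. -/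
inductive DTree (α : Type) : Type
  | leaf (label : Bool) : DTree α
  | node (feat : α) (thr : ℝ) (left right : DTree α) : DTree α

namespace DTree

/-- The class that the tree assigns to the example `e`. -/
noncomputable def classify {α : Type} : DTree α → (α → ℝ) → Bool
  | leaf c, _ => c
  | node f x l r, e => if e f ≤ x then l.classify e else r.classify e

/-- The number of cuts (internal nodes) of the tree. -/
def numCuts {α : Type} : DTree α → ℕ
  | leaf _ => 0
  | node _ _ l r => 1 + l.numCuts + r.numCuts

end DTree

/-- The number of errors of `T` on the training data set `(E, lab)`. -/
noncomputable def errorCount {α ι : Type} [Fintype ι] (E : ι → α → ℝ)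
    (lab : ι → Bool) (T : DTree α) : ℕ :=
  (Finset.univ.filter (fun i => T.classify (E i) ≠ lab i)).card

open Finset

theorem red_ne_blue : red ≠ blue := by decide

theorem ne_red_iff_eq_blue (b : Bool) : b ≠ red ↔ b = blue := by
  cases b <;> simp [red, blue]

namespace DTree

variable {α : Type}

noncomputable def cutChain : List α → ℝ → DTree α
  | [], _ => leaf blue
  | v :: vs, θ => node v θ (cutChain vs θ) (leaf red)

theorem numCuts_cutChain (L : List α) (θ : ℝ) : (cutChain L θ).numCuts = L.length := by
  induction L with
  | nil => rfl
  | cons v vs ih => simp only [cutChain, numCuts, ih, List.length_cons]; omega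

theorem classify_cutChain_eq_blue_iff (L : List α) (θ : ℝ) (e : α → ℝ) :
    (cutChain L θ).classify e = blue ↔ ∀ v ∈ L, e v ≤ θ := by
  induction L with
  | nil => simp [cutChain, classify]
  | cons v vs ih =>
    by_cases h : e v ≤ θ
    · simp [cutChain, classify, h, ih]
    · simp [cutChain, classify, h, red, blue]

variable [DecidableEq α]

noncomputable def pathFeatures : DTree α → (α → ℝ) → Finset α
  | leaf _, _ => ∅
  | node f θ l r, x => insert f (if x f ≤ θ then l.pathFeatures x else r.pathFeatures x)

theorem card_pathFeatures_le (T : DTree α) (x : α → ℝ) :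
    #(T.pathFeatures x) ≤ T.numCuts := by
  induction T with
  | leaf => simp [pathFeatures]
  | node f θ l r ihl ihr =>
    refine (card_insert_le _ _).trans ?_
    simp only [numCuts]
    split_ifs <;> omega

theorem classify_eq_of_eqOn_pathFeatures (T : DTree α) {e x : α → ℝ}
    (h : Set.EqOn e x (T.pathFeatures x)) : T.classify e = T.classify x := by
  induction T with
  | leaf => rfl
  | node f θ l r ihl ihr =>
    have hf : e f = x f := h (mem_insert_self _ _)
    by_cases hx : x f ≤ θ
    · have hl : Set.EqOn e x (l.pathFeatures x) := fun y hy => h (by simp [pathFeatures, hx, hy])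
      simp [classify, hf, hx, ihl hl]
    · have hr : Set.EqOn e x (r.pathFeatures x) := fun y hy => h (by simp [pathFeatures, hx, hy])
      simp [classify, hf, hx, ihr hr]

end DTree

section ErrorCount

variable {α : Type}

theorem errorCount_sumElim {ι₁ ι₂ : Type} [Fintype ι₁] [Fintype ι₂]
    (E₁ : ι₁ → α → ℝ) (E₂ : ι₂ → α → ℝ) (lab₁ : ι₁ → Bool) (lab₂ : ι₂ → Bool) (T : DTree α) :
    errorCount (Sum.elim E₁ E₂) (Sum.elim lab₁ lab₂) T
      = errorCount E₁ lab₁ T + errorCount E₂ lab₂ T := by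
  simp only [errorCount, card_filter, Fintype.sum_sum_type, Sum.elim_inl, Sum.elim_inr]
  rfl

theorem errorCount_const {ι : Type} [Fintype ι] (x : α → ℝ) (c : Bool) (T : DTree α) :
    errorCount (fun _ : ι => x) (fun _ => c) T = if T.classify x = c then 0 else Fintype.card ι := by
  split_ifs with h <;> simp [errorCount, h]

theorem errorCount_subtype {β : Type} (s : Finset β) (E : β → α → ℝ) (c : Bool) (T : DTree α) :
    errorCount (fun b : s => E b) (fun _ => c) T = #(s.filter fun b => T.classify (E b) ≠ c) := by
  rw [errorCount, univ_eq_attach, filter_attach (fun b => T.classify (E b) ≠ c), card_map,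
    card_attach]

end ErrorCount

section VertexCover

variable {V : Type} [DecidableEq V]

def edgeExample (e : Sym2 V) : V → ℝ := fun v => if v ∈ e then 1 else 0

theorem card_filter_cutChain_ne_red_add_card_covered (s : Finset (Sym2 V)) (S : Finset V) :
    #(s.filter fun e => (DTree.cutChain S.toList (1 / 2)).classify (edgeExample e) ≠ red)
      + #(s.filter fun e => ∃ v ∈ S, v ∈ e) = #s := by
  rw [add_comm, ← card_filter_add_card_filter_not (s := s) (fun e => ∃ v ∈ S, v ∈ e)]
  congr 2
  refine filter_congr fun e _ => ?_
  have hind (v : V) : edgeExample e v ≤ 1 / 2 ↔ v ∉ e := by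
    unfold edgeExample; split_ifs with hv <;> norm_num [hv]
  simp only [ne_red_iff_eq_blue, DTree.classify_cutChain_eq_blue_iff, mem_toList, hind, not_exists,
    not_and]

theorem card_le_card_filter_ne_red_add_card_covered (s : Finset (Sym2 V)) (T : DTree V)
    (h0 : T.classify (fun _ => 0) = blue) :
    #s ≤ #(s.filter fun e => T.classify (edgeExample e) ≠ red)
      + #(s.filter fun e => ∃ v ∈ T.pathFeatures (fun _ => 0), v ∈ e) := by
  refine (card_le_card fun e he => ?_).trans (card_union_le _ _)
  rw [mem_union, mem_filter, mem_filter]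
  by_cases hred : T.classify (edgeExample e) = red
  · refine Or.inr ⟨he, ?_⟩
    by_contra! hfar
    have hsame : T.classify (edgeExample e) = T.classify (fun _ => 0) :=
      T.classify_eq_of_eqOn_pathFeatures fun v hv => if_neg (hfar v hv)
    exact red_ne_blue (hred ▸ h0 ▸ hsame)
  · exact Or.inl ⟨he, hred⟩

end VertexCover

open Classical in
/-- Let `G` be a simple graph with exactly `m` edges and `κ, τ ∈ ℕ`.
Build the training data set over the features `{d_v : v ∈ V}`: for each edge `uw` a
red example with value `1` in the features of its two endpoints and `0` elsewhere,
and `|V|²` blue examples (indexed by `V × V`) with value `0` everywhere. Then `G` has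
a vertex set `S` with `|S| ≤ κ` covering at least `τ` edges if and only if there is a
decision tree over these features with at most `κ` cuts making at most `m − τ` errors
on this training data set. -/
theorem stmt10 {V : Type} [Fintype V] [DecidableEq V] (G : SimpleGraph V)
    [DecidableRel G.Adj] (m κ τ : ℕ) (hm : G.edgeFinset.card = m) :
    (∃ S : Finset V, S.card ≤ κ ∧
        τ ≤ (G.edgeFinset.filter (fun e => ∃ v ∈ S, v ∈ e)).card) ↔
    (∃ T : DTree V, T.numCuts ≤ κ ∧
      ((errorCount
          (fun q : {e : Sym2 V // e ∈ G.edgeFinset} ⊕ (V × V) =>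
            Sum.elim (fun es (v : V) => if v ∈ es.1 then (1 : ℝ) else 0)
              (fun _ (_ : V) => 0) q)
          (Sum.elim (fun _ => red) (fun _ => blue)) T : ℤ)
        ≤ (m : ℤ) - (τ : ℤ))) := by
  have hedges (T : DTree V) :
      errorCount (fun es : G.edgeFinset => fun v => if v ∈ es.1 then (1 : ℝ) else 0)
        (fun _ => red) T
        = #(G.edgeFinset.filter fun e => T.classify (edgeExample e) ≠ red) :=
    errorCount_subtype _ edgeExample red T
  simp only [errorCount_sumElim, hedges, errorCount_const]
  constructor
  · rintro ⟨S, hSκ, hτ⟩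
    refine ⟨DTree.cutChain S.toList (1 / 2), by simpa [DTree.numCuts_cutChain] using hSκ, ?_⟩
    have hzero : (DTree.cutChain S.toList (1 / 2)).classify (fun _ => 0) = blue :=
      (DTree.classify_cutChain_eq_blue_iff _ _ _).2 fun _ _ => by norm_num
    have hsplit := card_filter_cutChain_ne_red_add_card_covered G.edgeFinset S
    rw [if_pos hzero]
    omega
  · rintro ⟨T, hTκ, herr⟩
    refine ⟨T.pathFeatures (fun _ => 0), (T.card_pathFeatures_le _).trans hTκ, ?_⟩
    split_ifs at herr with hzero
    · have hsplit := card_le_card_filter_ne_red_add_card_covered G.edgeFinset T hzero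
      omega
    · have hmV : m ≤ Fintype.card V ^ 2 :=
        hm ▸ G.card_edgeFinset_le_card_choose_two.trans (Nat.choose_le_pow _ _)
      rw [Fintype.card_prod, ← sq] at herr
      omega
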